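/- In the free Lie algebra over $\mathbb{F}_p$ on generators $x_1,\dots,x_d$, the linear map $f \mapsto [f, x_j]$ restricted to the homogeneous component of degree $n$ is injective for $n > 1$, and for $n = 1$ its kernel is spanned by $x_j$. -/

import Mathlib

/-- The generator `x_i` of the free associative algebra `K⟨x_1,…,x_d⟩`,
realized as the monoid algebra of the free monoid. -/
noncomputable def freeGen (K : Type*) [Field K] {d : ℕ} (i : Fin d) :
    MonoidAlgebra K (FreeMonoid (Fin d)) :=
  MonoidAlgebra.single (FreeMonoid.of i) 1

/-- The degree-`n` homogeneous components of the free Lie algebra on `x_1,…,x_d`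
inside the free associative algebra, with bracket `[f,g] = fg - gf`:
`lieComponent K d 0 = K[Λ¹]` is the span of the generators, and
`lieComponent K d n = K[Λ^{n+1}]` is the span of brackets `[f, x_i]` together with
the brackets needed for the Lie algebra structure; since the free Lie algebra is
generated in degree one, `K[Λ^{n+1}] = [K[Λ^n], K[Λ¹]]`. -/
noncomputable def lieComponent (K : Type*) [Field K] (d : ℕ) :
    ℕ → Submodule K (MonoidAlgebra K (FreeMonoid (Fin d)))
  | 0 => Submodule.span K (Set.range (freeGen K))
  | n + 1 => Submodule.span K
      {x | ∃ f ∈ lieComponent K d n, ∃ i : Fin d,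
        x = f * freeGen K i - freeGen K i * f}

section aux

variable {K : Type*} [Field K] {d : ℕ}

/-- Coefficient extraction: `(h·x_j)` at `w ++ [j]` is `h` at `w`. -/
lemma coeff_mul_gen (j : Fin d) (h : MonoidAlgebra K (FreeMonoid (Fin d))) (w : List (Fin d)) :
    (h * freeGen K j).coeff (FreeMonoid.ofList (w ++ [j])) = h.coeff (FreeMonoid.ofList w) := by
  rw [freeGen, MonoidAlgebra.mul_single_apply_aux, mul_one]
  intro a _
  constructor
  · intro hh
    have := congrArg FreeMonoid.toList hh
    simp [FreeMonoid.toList_of] at this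
    exact congrArg FreeMonoid.ofList this ▸ (FreeMonoid.ofList_toList a).symm ▸ rfl
  · rintro rfl; rfl

/-- Coefficient extraction: `(x_j·h)` at `j :: u` is `h` at `u`. -/
lemma coeff_gen_mul (j : Fin d) (h : MonoidAlgebra K (FreeMonoid (Fin d))) (u : List (Fin d)) :
    (freeGen K j * h).coeff (FreeMonoid.ofList (j :: u)) = h.coeff (FreeMonoid.ofList u) := by
  rw [freeGen, MonoidAlgebra.single_mul_apply_aux, one_mul]
  intro a _
  constructor
  · intro hh
    have := congrArg FreeMonoid.toList hh
    simp [FreeMonoid.toList_of] at this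
    exact congrArg FreeMonoid.ofList this ▸ (FreeMonoid.ofList_toList a).symm ▸ rfl
  · rintro rfl; rfl

/-- `(x_i·h)` vanishes at words not starting with `i`. -/
lemma coeff_gen_mul_ne (i i' : Fin d) (hne : i' ≠ i) (h : MonoidAlgebra K (FreeMonoid (Fin d)))
    (u : List (Fin d)) : (freeGen K i * h).coeff (FreeMonoid.ofList (i' :: u)) = 0 := by
  rw [freeGen]
  apply MonoidAlgebra.single_mul_apply_of_not_exists_mul
  rintro ⟨dd, hdd⟩
  have := congrArg FreeMonoid.toList hdd
  simp [FreeMonoid.toList_of] at this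
  exact hne this.1

/-- `(h·x_i)` vanishes at words not ending with `i`. -/
lemma coeff_mul_gen_ne (i : Fin d) (h : MonoidAlgebra K (FreeMonoid (Fin d)))
    (w : List (Fin d)) (hw : w.getLast? ≠ some i) :
    (h * freeGen K i).coeff (FreeMonoid.ofList w) = 0 := by
  rw [freeGen]
  apply MonoidAlgebra.mul_single_apply_of_not_exists_mul
  rintro ⟨dd, hdd⟩
  have := congrArg FreeMonoid.toList hdd
  simp [FreeMonoid.toList_of] at this
  apply hw
  rw [this, List.getLast?_append]
  rfl

/-- The number of leading `j`'s in a word. -/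
def leadJ (j : Fin d) : List (Fin d) → ℕ
  | [] => 0
  | i :: t => if i = j then leadJ j t + 1 else 0

lemma leadJ_append (j : Fin d) (t : List (Fin d)) (ht : ∃ i ∈ t, i ≠ j) :
    leadJ j (t ++ [j]) = leadJ j t := by
  induction t with
  | nil => obtain ⟨i, hi, _⟩ := ht; exact absurd hi List.not_mem_nil
  | cons a t ih =>
    by_cases ha : a = j
    · subst ha
      obtain ⟨i, hi, hij⟩ := ht
      have hit : i ∈ t := by
        rcases List.mem_cons.mp hi with h1 | h1
        · exact absurd h1 hij
        · exact h1
      show leadJ a (a :: (t ++ [a])) = leadJ a (a :: t)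
      simp only [leadJ, if_pos rfl]
      rw [ih ⟨i, hit, hij⟩]
    · simp [leadJ, ha]

/-- Centralizer: if `h` commutes with `x_j` then `h` is supported on pure powers of `x_j`. -/
lemma centralizer_supp (j : Fin d) (h : MonoidAlgebra K (FreeMonoid (Fin d)))
    (hc : h * freeGen K j = freeGen K j * h) :
    ∀ w : List (Fin d), (∃ i ∈ w, i ≠ j) → h.coeff (FreeMonoid.ofList w) = 0 := by
  have key : ∀ k : ℕ, ∀ w : List (Fin d), leadJ j w ≤ k → (∃ i ∈ w, i ≠ j) →
      h.coeff (FreeMonoid.ofList w) = 0 := by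
    intro k
    induction k with
    | zero =>
      intro w hw hex
      rcases w with _ | ⟨i, t⟩
      · obtain ⟨i, hi, _⟩ := hex; exact absurd hi List.not_mem_nil
      ·
        by_cases hi : i = j
        · subst hi
          simp [leadJ] at hw
        · have e : (h * freeGen K j).coeff (FreeMonoid.ofList ((i :: t) ++ [j]))
              = (freeGen K j * h).coeff (FreeMonoid.ofList ((i :: t) ++ [j])) := by rw [hc]
          rw [coeff_mul_gen] at e
          rw [show ((i :: t) ++ [j]) = i :: (t ++ [j]) by simp] at e
          rw [coeff_gen_mul_ne j i hi] at e
          exact e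
    | succ k ih =>
      intro w hw hex
      rcases w with _ | ⟨i, t⟩
      · obtain ⟨i, hi, _⟩ := hex; exact absurd hi List.not_mem_nil
      ·
        by_cases hi : i = j
        · subst hi
          obtain ⟨i', hi', hij⟩ := hex
          have hit : i' ∈ t := by
            rcases List.mem_cons.mp hi' with h1 | h1
            · exact absurd h1 hij
            · exact h1
          have e : (h * freeGen K i).coeff (FreeMonoid.ofList ((i :: t) ++ [i]))
              = (freeGen K i * h).coeff (FreeMonoid.ofList ((i :: t) ++ [i])) := by rw [hc]
          rw [coeff_mul_gen] at e
          rw [show ((i :: t) ++ [i]) = i :: (t ++ [i]) by simp] at e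
          rw [coeff_gen_mul] at e
          rw [e]
          apply ih
          · rw [leadJ_append i t ⟨i', hit, hij⟩]
            have hw' : leadJ i (i :: t) ≤ k + 1 := hw
            simp [leadJ] at hw'
            omega
          · exact ⟨i', List.mem_append_left _ hit, hij⟩
        · have e : (h * freeGen K j).coeff (FreeMonoid.ofList ((i :: t) ++ [j]))
              = (freeGen K j * h).coeff (FreeMonoid.ofList ((i :: t) ++ [j])) := by rw [hc]
          rw [coeff_mul_gen] at e
          rw [show ((i :: t) ++ [j]) = i :: (t ++ [j]) by simp] at e
          rw [coeff_gen_mul_ne j i hi] at e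
          exact e
  intro w hex
  exact key (leadJ j w) w le_rfl hex

/-- Every element of a span of brackets has vanishing coefficients at `x_j^k`. -/
lemma bracket_coeff_replicate (j : Fin d) (S : Set (MonoidAlgebra K (FreeMonoid (Fin d))))
    (hS : ∀ x ∈ S, ∃ f, ∃ i : Fin d, x = f * freeGen K i - freeGen K i * f)
    (h : MonoidAlgebra K (FreeMonoid (Fin d))) (hh : h ∈ Submodule.span K S) :
    ∀ k : ℕ, h.coeff (FreeMonoid.ofList (List.replicate k j)) = 0 := by
  induction hh using Submodule.span_induction with
  | mem x hx =>
    obtain ⟨f, i, rfl⟩ := hS x hx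
    intro k
    rw [MonoidAlgebra.coeff_sub, Finsupp.sub_apply]
    match k with
    | 0 =>
      rw [List.replicate_zero]
      rw [coeff_mul_gen_ne i f [] (by simp)]
      rw [show (FreeMonoid.ofList ([] : List (Fin d))) = FreeMonoid.ofList ([] : List (Fin d)) from rfl]
      have : (freeGen K i * f).coeff (FreeMonoid.ofList ([] : List (Fin d))) = 0 := by
        rw [freeGen]
        apply MonoidAlgebra.single_mul_apply_of_not_exists_mul
        rintro ⟨dd, hdd⟩
        have := congrArg FreeMonoid.toList hdd
        simp [FreeMonoid.toList_of] at this
      rw [this, sub_zero]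
    | s + 1 =>
      by_cases hij : i = j
      · subst hij
        rw [List.replicate_succ']
        rw [coeff_mul_gen]
        rw [← List.replicate_succ', List.replicate_succ]
        rw [coeff_gen_mul]
        rw [sub_self]
      · have h1 : (f * freeGen K i).coeff (FreeMonoid.ofList (List.replicate (s + 1) j)) = 0 := by
          apply coeff_mul_gen_ne
          rw [List.replicate_succ', List.getLast?_append]
          simp
          exact fun hji => hij hji.symm
        have h2 : (freeGen K i * f).coeff (FreeMonoid.ofList (List.replicate (s + 1) j)) = 0 := by
          rw [List.replicate_succ]
          exact coeff_gen_mul_ne i j (fun hji => hij hji.symm) f _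
        rw [h1, h2, sub_zero]
  | zero => intro k; simp
  | add x y hx hy ihx ihy => intro k; rw [MonoidAlgebra.coeff_add, Finsupp.add_apply, ihx k, ihy k, add_zero]
  | smul a x hx ihx => intro k; rw [MonoidAlgebra.coeff_smul_apply, ihx k, smul_zero]

/-- Elements of the degree-one component vanish at words of length ≠ 1. -/
lemma deg_one_coeff (f : MonoidAlgebra K (FreeMonoid (Fin d))) (hf : f ∈ lieComponent K d 0) :
    ∀ w : List (Fin d), w.length ≠ 1 → f.coeff (FreeMonoid.ofList w) = 0 := by
  rw [lieComponent] at hf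
  induction hf using Submodule.span_induction with
  | mem x hx =>
    classical
    obtain ⟨i, rfl⟩ := hx
    intro w hw
    rw [freeGen, MonoidAlgebra.single_apply]
    rw [if_neg]
    intro he
    apply hw
    have := congrArg FreeMonoid.toList he
    simp [FreeMonoid.toList_of] at this
    rw [← this]
    rfl
  | zero => intro w hw; simp
  | add x y hx hy ihx ihy => intro w hw; rw [MonoidAlgebra.coeff_add, Finsupp.add_apply, ihx w hw, ihy w hw, add_zero]
  | smul a x hx ihx => intro w hw; rw [MonoidAlgebra.coeff_smul_apply, ihx w hw, smul_zero]

end aux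

/-- In the free Lie algebra over `𝔽_p` on `x_1,…,x_d`, the map `f ↦ [f, x_j]`
restricted to the homogeneous component of degree `n` is injective for `n > 1`
(components of degree `n` are `lieComponent (ZMod p) d (n-1)`), and for `n = 1`
its kernel is spanned by `x_j`. -/
theorem stmt_12 (p : ℕ) [Fact p.Prime] (d : ℕ) (j : Fin d) :
    (∀ n : ℕ, 1 ≤ n → ∀ f ∈ lieComponent (ZMod p) d n, ∀ g ∈ lieComponent (ZMod p) d n,
      f * freeGen (ZMod p) j - freeGen (ZMod p) j * f =
        g * freeGen (ZMod p) j - freeGen (ZMod p) j * g → f = g) ∧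
    (∀ f ∈ lieComponent (ZMod p) d 0,
      (f * freeGen (ZMod p) j - freeGen (ZMod p) j * f = 0 ↔
        f ∈ Submodule.span (ZMod p) {freeGen (ZMod p) j})) := by
  constructor
  · intro n hn f hf g hg heq
    obtain ⟨m, rfl⟩ : ∃ m, n = m + 1 := ⟨n - 1, by omega⟩
    have hfg : f - g ∈ lieComponent (ZMod p) d (m + 1) := sub_mem hf hg
    have hc : (f - g) * freeGen (ZMod p) j = freeGen (ZMod p) j * (f - g) := by
      rw [sub_mul, mul_sub]
      exact sub_eq_sub_iff_sub_eq_sub.mp heq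
    have hz : f - g = 0 := by
      refine MonoidAlgebra.ext (Finsupp.ext ?_)
      intro w
      rw [MonoidAlgebra.coeff_zero, Finsupp.zero_apply]
      by_cases hw : ∃ i ∈ FreeMonoid.toList w, i ≠ j
      · have := centralizer_supp j (f - g) hc (FreeMonoid.toList w) hw
        rwa [FreeMonoid.ofList_toList] at this
      · push_neg at hw
        have hrep : FreeMonoid.toList w = List.replicate (FreeMonoid.toList w).length j :=
          List.eq_replicate_of_mem hw
        have hmem : f - g ∈ Submodule.span (ZMod p)
            {x | ∃ f' ∈ lieComponent (ZMod p) d m, ∃ i : Fin d,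
              x = f' * freeGen (ZMod p) i - freeGen (ZMod p) i * f'} := by
          rw [lieComponent] at hfg
          exact hfg
        have := bracket_coeff_replicate j _ (by rintro x ⟨f', _, i, rfl⟩; exact ⟨f', i, rfl⟩)
          (f - g) hmem (FreeMonoid.toList w).length
        rw [← hrep, FreeMonoid.ofList_toList] at this
        exact this
    exact sub_eq_zero.mp hz
  · intro f hf
    constructor
    · intro h0
      have hc : f * freeGen (ZMod p) j = freeGen (ZMod p) j * f := sub_eq_zero.mp h0
      have hfj : f = f.coeff (FreeMonoid.of j) • freeGen (ZMod p) j := by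
        classical
        refine MonoidAlgebra.ext (Finsupp.ext ?_)
        intro w
        rw [MonoidAlgebra.coeff_smul_apply, freeGen, MonoidAlgebra.single_apply, smul_eq_mul]
        by_cases hw : FreeMonoid.of j = w
        · rw [if_pos hw, mul_one, hw]
        · rw [if_neg hw, mul_zero]
          by_cases hne : ∃ i ∈ FreeMonoid.toList w, i ≠ j
          · have := centralizer_supp j f hc (FreeMonoid.toList w) hne
            rwa [FreeMonoid.ofList_toList] at this
          · push_neg at hne
            have hlen : (FreeMonoid.toList w).length ≠ 1 := by
              intro h1
              apply hw
              have hrep : FreeMonoid.toList w = List.replicate (FreeMonoid.toList w).length j :=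
                List.eq_replicate_of_mem hne
              rw [h1, List.replicate_one] at hrep
              have : FreeMonoid.ofList (FreeMonoid.toList w) = FreeMonoid.ofList [j] := by
                rw [hrep]
              rw [FreeMonoid.ofList_toList] at this
              exact this.symm
            have := deg_one_coeff f hf (FreeMonoid.toList w) hlen
            rwa [FreeMonoid.ofList_toList] at this
      rw [hfj]
      exact Submodule.smul_mem _ _ (Submodule.mem_span_singleton_self _)
    · intro hmem
      obtain ⟨c, hc⟩ := Submodule.mem_span_singleton.mp hmem
      rw [← hc, smul_mul_assoc, mul_smul_comm, sub_self]
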